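/- arXiv:1612.03445 — 4 statements merged into one kernel-verified Lean document; each statement's English description precedes it below -/
import Mathlib

section
/- Let α ∈ (1,2], β ∈ (0,1), ξ ∈ (0,1). Then for every continuous function y : [0,1] → ℝ and every t ∈ [0,1], (1/Γ(α))·∫₀ᵗ (t−s)^{α−1} y(s) ds + (ξ/((1−ξ)·Γ(α)))·∫₀¹ (1−s)^{α−1} y(s) ds − (Γ(2−β)/Γ(α−β))·(t + ξ/(1−ξ))·∫₀¹ (1−s)^{α−β−1} y(s) ds = ∫₀¹ G(t,s) y(s) ds, i.e. the solution u(t) = Iᵅy(t) + (ξ/(1−ξ))Iᵅy(1) − Γ(2−β)(t + ξ/(1−ξ))I^{α−β}y(1) of the linear boundary value problem ᶜDᵅu(t) = y(t), u(0) = ξu(1), ᶜDᵝu(0) = ξ·ᶜDᵝu(1) has the Green-function representation u(t) = ∫₀¹ G(t,s) y(s) ds. -/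
open Real MeasureTheory Set

/-! `G(t, s)` is the kernel `(t - s)^(α-1)/Γ(α)` of `Iᵅ` truncated to `s ≤ t`, plus a combination
of `(1 - s)^(α-1)` and `(1 - s)^(α-β-1)` whose coefficients, once `1 - ξ` is divided out, are those
of `Iᵅy(1)` and `I^(α-β)y(1)` in the solution formula. Integrating against `y` term by term gives
the representation; the three kernels are integrable because their exponents exceed `-1`. -/

/-- The Green function of the fractional boundary value problem. -/
noncomputable def G (α β ξ : ℝ) (t s : ℝ) : ℝ :=
  if s ≤ t then
    ((1 - ξ) * (t - s) ^ (α - 1) + ξ * (1 - s) ^ (α - 1)) / (Real.Gamma α * (1 - ξ))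
      - Real.Gamma (2 - β) * (ξ + (1 - ξ) * t) * (1 - s) ^ (α - β - 1)
          / (Real.Gamma (α - β) * (1 - ξ))
  else
    ξ * (1 - s) ^ (α - 1) / (Real.Gamma α * (1 - ξ))
      - Real.Gamma (2 - β) * (ξ + (1 - ξ) * t) * (1 - s) ^ (α - β - 1)
          / (Real.Gamma (α - β) * (1 - ξ))

/-- `G* = sup_{t ∈ [0,1]} ∫₀¹ |G(t,s)| ds`. -/
noncomputable def Gstar (α β ξ : ℝ) : ℝ :=
  ⨆ t : Set.Icc (0 : ℝ) 1, ∫ s in (0 : ℝ)..1, |G α β ξ (t : ℝ) s|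

theorem intervalIntegrable_sub_rpow_mul {r a b : ℝ} (hr : -1 < r) {y : ℝ → ℝ}
    (hy : ContinuousOn y (uIcc a b)) :
    IntervalIntegrable (fun s => (b - s) ^ r * y s) volume a b := by
  have hkernel : IntervalIntegrable (fun s => (b - s) ^ r) volume a b := by
    simpa using (intervalIntegral.intervalIntegrable_rpow' (a := b - a) (b := 0) hr).comp_sub_left b
  exact hkernel.mul_continuousOn hy

theorem intervalIntegrable_indicator_le {E : Type*} [NormedAddCommGroup E] {μ : Measure ℝ}
    {f : ℝ → E} {a b t : ℝ} (ht : t ∈ Icc a b) (hf : IntervalIntegrable f μ a t) :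
    IntervalIntegrable ({x | x ≤ t}.indicator f) μ a b := by
  rw [intervalIntegrable_iff_integrableOn_Ioc_of_le (ht.1.trans ht.2)]
  rw [intervalIntegrable_iff_integrableOn_Ioc_of_le ht.1] at hf
  change IntegrableOn ((Iic t).indicator f) _ _
  rwa [integrableOn_indicator_iff measurableSet_Iic, Iic_inter_Ioc_of_le ht.2]

theorem G_eq_indicator_add {α β ξ : ℝ} (hξ : ξ ≠ 1) (t s : ℝ) :
    G α β ξ t s = {x | x ≤ t}.indicator (fun s => (t - s) ^ (α - 1) / Gamma α) s
      + ξ / ((1 - ξ) * Gamma α) * (1 - s) ^ (α - 1)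
      - Gamma (2 - β) / Gamma (α - β) * (t + ξ / (1 - ξ)) * (1 - s) ^ (α - β - 1) := by
  have h1ξ : 1 - ξ ≠ 0 := sub_ne_zero.mpr hξ.symm
  by_cases hst : s ≤ t
  · simp only [G, hst, if_true, indicator_of_mem (show s ∈ {x | x ≤ t} from hst)]
    field_simp
    ring
  · simp only [G, hst, if_false, indicator_of_notMem (show s ∉ {x | x ≤ t} from hst)]
    field_simp
    ring

/-- Green-function representation of the solution of the linear BVP
`ᶜDᵅu = y`, `u(0) = ξ u(1)`, `ᶜDᵝu(0) = ξ ᶜDᵝu(1)`. -/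
theorem green_representation (α β ξ : ℝ) (hα : 1 < α ∧ α ≤ 2) (hβ : 0 < β ∧ β < 1)
    (hξ : 0 < ξ ∧ ξ < 1) (y : ℝ → ℝ) (hy : ContinuousOn y (Set.Icc 0 1))
    (t : ℝ) (ht : t ∈ Set.Icc (0 : ℝ) 1) :
    (1 / Real.Gamma α) * (∫ s in (0 : ℝ)..t, (t - s) ^ (α - 1) * y s)
      + (ξ / ((1 - ξ) * Real.Gamma α)) * (∫ s in (0 : ℝ)..1, (1 - s) ^ (α - 1) * y s)
      - (Real.Gamma (2 - β) / Real.Gamma (α - β)) * (t + ξ / (1 - ξ))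
          * (∫ s in (0 : ℝ)..1, (1 - s) ^ (α - β - 1) * y s)
    = ∫ s in (0 : ℝ)..1, G α β ξ t s * y s := by
  have hξ1 : ξ ≠ 1 := hξ.2.ne
  have hy01 : ContinuousOn y (uIcc 0 1) := by rwa [uIcc_of_le zero_le_one]
  have hy0t : ContinuousOn y (uIcc 0 t) := by
    rw [uIcc_of_le ht.1]
    exact hy.mono (Icc_subset_Icc_right ht.2)
  have hIα : IntervalIntegrable (fun s => (t - s) ^ (α - 1) * y s) volume 0 t :=
    intervalIntegrable_sub_rpow_mul (by linarith) hy0t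
  have hIα1 : IntervalIntegrable (fun s => (1 - s) ^ (α - 1) * y s) volume 0 1 :=
    intervalIntegrable_sub_rpow_mul (by linarith) hy01
  have hIαβ1 : IntervalIntegrable (fun s => (1 - s) ^ (α - β - 1) * y s) volume 0 1 :=
    intervalIntegrable_sub_rpow_mul (by linarith) hy01
  have hIndicator : IntervalIntegrable
      ({x | x ≤ t}.indicator fun s => (t - s) ^ (α - 1) / Gamma α * y s) volume 0 1 :=
    intervalIntegrable_indicator_le ht (by simpa only [div_mul_eq_mul_div] using hIα.div_const _)
  calc _ = ∫ s in (0 : ℝ)..1,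
          {x | x ≤ t}.indicator (fun s => (t - s) ^ (α - 1) / Gamma α * y s) s
            + ξ / ((1 - ξ) * Gamma α) * ((1 - s) ^ (α - 1) * y s)
            - Gamma (2 - β) / Gamma (α - β) * (t + ξ / (1 - ξ)) * ((1 - s) ^ (α - β - 1) * y s) := by
        rw [intervalIntegral.integral_sub (hIndicator.add (hIα1.const_mul _)) (hIαβ1.const_mul _),
          intervalIntegral.integral_add hIndicator (hIα1.const_mul _),
          intervalIntegral.integral_indicator ht, intervalIntegral.integral_const_mul,
          intervalIntegral.integral_const_mul]
        simp_rw [div_mul_eq_mul_div, intervalIntegral.integral_div]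
        ring
    _ = ∫ s in (0 : ℝ)..1, G α β ξ t s * y s := by
        refine intervalIntegral.integral_congr fun s _ => ?_
        rw [G_eq_indicator_add hξ1, indicator_mul_left]
        ring
end

section
/- Let α ∈ (1,2], β ∈ (0,1), ξ ∈ (0,1). Then: (i) for every continuous y : [0,1] → ℝ, the function t ↦ ∫₀¹ G(t,s) y(s) ds is continuous on [0,1]; and (ii) the function t ↦ ∫₀¹ |G(t,s)| ds is bounded on [0,1], so that G* = sup_{t ∈ [0,1]} ∫₀¹ |G(t,s)| ds is a finite real number (even though, when α − β < 1, the Green function G(t,s) itself is unbounded). -/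
open Real MeasureTheory Set

/-!
For `t, s ∈ [0,1]` the Green function splits as `G = A - B` with
`0 ≤ A ≤ 1 / (Γ(α)(1-ξ))` and `0 ≤ B ≤ c (1-s)^(α-β-1)`, so `|G(t,s)|` is dominated, uniformly
in `t`, by a function of `s` which is integrable because `α - β - 1 > -1`.  Writing
`(t-s)^(α-1)` as `max (t-s) 0 ^ (α-1)` (valid as `α ≠ 1`) shows that `G` is continuous in `t`,
so both claims follow from dominated convergence and monotonicity of the integral.
-/

theorem continuousOn_intervalIntegral_mul_of_dominated {K : ℝ → ℝ → ℝ} {bound y : ℝ → ℝ}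
    {I : Set ℝ} {a b : ℝ} (hab : a ≤ b) (hK_cont : ∀ s, ContinuousOn (K · s) I)
    (hK_meas : ∀ t, Measurable (K t)) (hK_le : ∀ t ∈ I, ∀ s ∈ Icc a b, |K t s| ≤ bound s)
    (hbound : IntervalIntegrable bound volume a b) (hy : ContinuousOn y (Icc a b)) :
    ContinuousOn (fun t => ∫ s in a..b, K t s * y s) I := by
  obtain ⟨C, hC⟩ := isCompact_Icc.exists_bound_of_continuousOn hy
  have hIoc : uIoc a b = Ioc a b := uIoc_of_le hab
  have hy_meas : AEStronglyMeasurable y (volume.restrict (uIoc a b)) := by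
    rw [hIoc]
    exact (hy.mono Ioc_subset_Icc_self).aestronglyMeasurable measurableSet_Ioc
  intro t₀ ht₀
  apply intervalIntegral.continuousWithinAt_of_dominated_interval
    (bound := fun s => bound s * max C 0)
  · exact .of_forall fun t => (hK_meas t).aestronglyMeasurable.mul hy_meas
  · filter_upwards [eventually_mem_nhdsWithin] with t ht
    refine .of_forall fun s hs => ?_
    have hs : s ∈ Icc a b := Ioc_subset_Icc_self (hIoc ▸ hs)
    have hbound_nonneg : 0 ≤ bound s := (abs_nonneg _).trans (hK_le t₀ ht₀ s hs)
    rw [norm_mul]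
    exact mul_le_mul (hK_le t ht s hs) ((hC s hs).trans (le_max_left _ _)) (norm_nonneg _)
      hbound_nonneg
  · exact hbound.mul_const _
  · exact .of_forall fun s _ => (hK_cont s t₀ ht₀).mul continuousWithinAt_const

section GreenFunction

variable {α β ξ : ℝ}

theorem G_eq_of_ne_one (hα : α ≠ 1) (t s : ℝ) :
    G α β ξ t s =
      ((1 - ξ) * max (t - s) 0 ^ (α - 1) + ξ * (1 - s) ^ (α - 1)) / (Gamma α * (1 - ξ))
        - Gamma (2 - β) * (ξ + (1 - ξ) * t) * (1 - s) ^ (α - β - 1)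
            / (Gamma (α - β) * (1 - ξ)) := by
  unfold G
  split_ifs with h
  · rw [max_eq_left (sub_nonneg.mpr h)]
  · rw [max_eq_right (by linarith), zero_rpow (sub_ne_zero.mpr hα)]
    ring

theorem continuous_G_left (hα : 1 < α) (s : ℝ) : Continuous (fun t => G α β ξ t s) := by
  simp only [G_eq_of_ne_one hα.ne']
  have := continuous_rpow_const (q := α - 1) (by linarith)
  fun_prop

theorem measurable_G (t : ℝ) : Measurable (G α β ξ t) :=
  Measurable.ite (measurableSet_le measurable_id measurable_const) (by fun_prop) (by fun_prop)

noncomputable def greenBound (α β ξ : ℝ) (s : ℝ) : ℝ :=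
  1 / (Gamma α * (1 - ξ)) + Gamma (2 - β) / (Gamma (α - β) * (1 - ξ)) * (1 - s) ^ (α - β - 1)

theorem abs_G_le_greenBound (hα : 1 < α) (hβ : β < 1) (hξ₀ : 0 ≤ ξ) (hξ₁ : ξ < 1)
    {t s : ℝ} (ht : t ∈ Icc (0 : ℝ) 1) (hs : s ∈ Icc (0 : ℝ) 1) :
    |G α β ξ t s| ≤ greenBound α β ξ s := by
  obtain ⟨ht₀, ht₁⟩ := ht
  obtain ⟨hs₀, hs₁⟩ := hs
  have hΓα : 0 < Gamma α := Gamma_pos_of_pos (by linarith)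
  have hΓαβ : 0 < Gamma (α - β) := Gamma_pos_of_pos (by linarith)
  have hΓ2β : 0 < Gamma (2 - β) := Gamma_pos_of_pos (by linarith)
  have h1ξ : 0 < 1 - ξ := by linarith
  have hq₀ : 0 ≤ max (t - s) 0 ^ (α - 1) := rpow_nonneg (le_max_right _ _) _
  have hq₁ : max (t - s) 0 ^ (α - 1) ≤ 1 :=
    rpow_le_one (le_max_right _ _) (max_le (by linarith) zero_le_one) (by linarith)
  have hp₀ : 0 ≤ (1 - s) ^ (α - 1) := rpow_nonneg (by linarith) _
  have hp₁ : (1 - s) ^ (α - 1) ≤ 1 := rpow_le_one (by linarith) (by linarith) (by linarith)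
  have hr₀ : 0 ≤ (1 - s) ^ (α - β - 1) := rpow_nonneg (by linarith) _
  have hw₀ : 0 ≤ ξ + (1 - ξ) * t := by positivity
  have hw₁ : ξ + (1 - ξ) * t ≤ 1 := by nlinarith
  have hA₀ : 0 ≤ ((1 - ξ) * max (t - s) 0 ^ (α - 1) + ξ * (1 - s) ^ (α - 1))
      / (Gamma α * (1 - ξ)) := by positivity
  have hA₁ : ((1 - ξ) * max (t - s) 0 ^ (α - 1) + ξ * (1 - s) ^ (α - 1))
      / (Gamma α * (1 - ξ)) ≤ 1 / (Gamma α * (1 - ξ)) := by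
    gcongr
    nlinarith
  have hB₀ : 0 ≤ Gamma (2 - β) * (ξ + (1 - ξ) * t) * (1 - s) ^ (α - β - 1)
      / (Gamma (α - β) * (1 - ξ)) := by positivity
  have hB₁ : Gamma (2 - β) * (ξ + (1 - ξ) * t) * (1 - s) ^ (α - β - 1)
      / (Gamma (α - β) * (1 - ξ))
      ≤ Gamma (2 - β) / (Gamma (α - β) * (1 - ξ)) * (1 - s) ^ (α - β - 1) := by
    rw [div_mul_eq_mul_div]
    gcongr
    exact mul_le_of_le_one_right hΓ2β.le hw₁
  rw [G_eq_of_ne_one hα.ne', greenBound]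
  exact abs_le.mpr ⟨by linarith, by linarith⟩

theorem intervalIntegrable_greenBound (hαβ : β < α) :
    IntervalIntegrable (greenBound α β ξ) volume 0 1 := by
  refine intervalIntegrable_const.add (IntervalIntegrable.const_mul ?_ _)
  simpa using ((intervalIntegral.intervalIntegrable_rpow' (a := 0) (b := 1)
    (r := α - β - 1) (by linarith)).comp_sub_left 1).symm

end GreenFunction

/-- (i) `t ↦ ∫₀¹ G(t,s) y(s) ds` is continuous on `[0,1]` for every continuous `y`, and
(ii) `t ↦ ∫₀¹ |G(t,s)| ds` is bounded on `[0,1]`, so `G*` is a finite real number. -/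
theorem green_integral_continuous_and_bounded (α β ξ : ℝ) (hα : 1 < α ∧ α ≤ 2)
    (hβ : 0 < β ∧ β < 1) (hξ : 0 < ξ ∧ ξ < 1) :
    (∀ y : ℝ → ℝ, ContinuousOn y (Set.Icc 0 1) →
        ContinuousOn (fun t => ∫ s in (0 : ℝ)..1, G α β ξ t s * y s) (Set.Icc 0 1))
      ∧ ∃ M : ℝ, ∀ t ∈ Set.Icc (0 : ℝ) 1, (∫ s in (0 : ℝ)..1, |G α β ξ t s|) ≤ M := by
  have hle : ∀ t ∈ Icc (0 : ℝ) 1, ∀ s ∈ Icc (0 : ℝ) 1, |G α β ξ t s| ≤ greenBound α β ξ s :=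
    fun t ht s hs => abs_G_le_greenBound hα.1 hβ.2 hξ.1.le hξ.2 ht hs
  have hint := intervalIntegrable_greenBound (ξ := ξ) (hβ.2.trans hα.1)
  refine ⟨fun y hy => continuousOn_intervalIntegral_mul_of_dominated zero_le_one
    (fun s => (continuous_G_left hα.1 s).continuousOn) measurable_G hle hint hy,
    ∫ s in (0 : ℝ)..1, greenBound α β ξ s, fun t ht => ?_⟩
  have hG_int : IntervalIntegrable (G α β ξ t) volume 0 1 := by
    refine hint.mono_fun' (measurable_G t).aestronglyMeasurable ?_
    rw [uIoc_of_le zero_le_one]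
    filter_upwards [ae_restrict_mem measurableSet_Ioc] with s hs
    exact hle t ht s (Ioc_subset_Icc_self hs)
  exact intervalIntegral.integral_mono_on zero_le_one hG_int.abs hint (hle t ht)
end

section
/- Let α ∈ (1,2], β ∈ (0,1), and let F : [0,1] → ℝ be continuous with |F(s)| ≤ M for all s ∈ [0,1]. Then for all 0 ≤ t₁ ≤ t₂ ≤ 1, |(T₂F)(t₂) − (T₂F)(t₁)| ≤ M·( (t₂ − t₁) + (t₂^{2−α} − t₁^{2−α})·Γ(2−β)/(Γ(3−α)Γ(α−β+1)) ). In particular the family {T₂F : F continuous, |F| ≤ M} is equicontinuous on [0,1]. -/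
open Real MeasureTheory Set

/-! The increment of `T₂F` splits into `∫_{t₁}^{t₂} F`, bounded by `M (t₂ - t₁)`, and
`t₂^{2-α} - t₁^{2-α}` times a constant multiple of `∫₀¹ (1-s)^{α-β-1} F(s) ds`, bounded by
`M / (α - β)`; the identity `Γ(α-β+1) = (α-β) Γ(α-β)` absorbs the factor `1 / (α - β)`. -/

lemma intervalIntegrable_one_sub_rpow {γ : ℝ} (hγ : 0 < γ) :
    IntervalIntegrable (fun s : ℝ => (1 - s) ^ (γ - 1)) volume 0 1 := by
  simpa using ((intervalIntegral.intervalIntegrable_rpow' (a := 0) (b := 1)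
    (by linarith : -1 < γ - 1)).comp_sub_left 1).symm

lemma integral_one_sub_rpow {γ : ℝ} (hγ : 0 < γ) :
    ∫ s in (0 : ℝ)..1, (1 - s) ^ (γ - 1) = 1 / γ := by
  rw [intervalIntegral.integral_comp_sub_left (fun s : ℝ => s ^ (γ - 1)) 1, sub_self, sub_zero,
    integral_rpow (Or.inl (by linarith)), sub_add_cancel, one_rpow, zero_rpow hγ.ne']
  ring

lemma abs_integral_one_sub_rpow_mul_le {γ M : ℝ} (hγ : 0 < γ) {F : ℝ → ℝ}
    (hFM : ∀ s ∈ Icc (0 : ℝ) 1, |F s| ≤ M) :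
    |∫ s in (0 : ℝ)..1, (1 - s) ^ (γ - 1) * F s| ≤ M / γ := by
  have hM : 0 ≤ M := (abs_nonneg _).trans (hFM 0 ⟨le_rfl, zero_le_one⟩)
  have hle := intervalIntegral.norm_integral_le_abs_of_norm_le
    (f := fun s => (1 - s) ^ (γ - 1) * F s) (g := fun s : ℝ => (1 - s) ^ (γ - 1) * M) ?_
    ((intervalIntegrable_one_sub_rpow hγ).mul_const M)
  · rwa [intervalIntegral.integral_mul_const, integral_one_sub_rpow hγ, one_div_mul_eq_div,
      abs_of_nonneg (div_nonneg hM hγ.le)] at hle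
  · filter_upwards [ae_restrict_mem measurableSet_uIoc] with s hs
    rw [uIoc_of_le zero_le_one] at hs
    have hw : 0 ≤ (1 - s) ^ (γ - 1) := rpow_nonneg (by linarith [hs.2]) _
    rw [norm_mul, norm_of_nonneg hw]
    exact mul_le_mul_of_nonneg_left (hFM s (Ioc_subset_Icc_self hs)) hw

lemma abs_integral_le_of_abs_le {F : ℝ → ℝ} {a b M : ℝ} (hab : a ≤ b)
    (hFM : ∀ s ∈ Ioc a b, |F s| ≤ M) :
    |∫ s in a..b, F s| ≤ M * (b - a) := by
  have hle := intervalIntegral.norm_integral_le_of_norm_le_const (f := F) (C := M)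
    (fun s hs => hFM s (by rwa [uIoc_of_le hab] at hs))
  rwa [abs_of_nonneg (sub_nonneg.2 hab)] at hle

/-- Equicontinuity estimate for the operator `T₂`:
`|(T₂F)(t₂) − (T₂F)(t₁)| ≤ M((t₂−t₁) + (t₂^{2−α} − t₁^{2−α})Γ(2−β)/(Γ(3−α)Γ(α−β+1)))`. -/
theorem T2_equicontinuous (α β : ℝ) (hα : 1 < α ∧ α ≤ 2) (hβ : 0 < β ∧ β < 1)
    (F : ℝ → ℝ) (M : ℝ) (hF : ContinuousOn F (Set.Icc 0 1))
    (hFM : ∀ s ∈ Set.Icc (0 : ℝ) 1, |F s| ≤ M)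
    (t₁ t₂ : ℝ) (h₀ : 0 ≤ t₁) (h₁₂ : t₁ ≤ t₂) (h₂ : t₂ ≤ 1) :
    |((∫ s in (0 : ℝ)..t₂, F s)
        - (Real.Gamma (2 - β) * t₂ ^ (2 - α) / (Real.Gamma (3 - α) * Real.Gamma (α - β)))
            * (∫ s in (0 : ℝ)..1, (1 - s) ^ (α - β - 1) * F s))
      - ((∫ s in (0 : ℝ)..t₁, F s)
        - (Real.Gamma (2 - β) * t₁ ^ (2 - α) / (Real.Gamma (3 - α) * Real.Gamma (α - β)))
            * (∫ s in (0 : ℝ)..1, (1 - s) ^ (α - β - 1) * F s))|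
    ≤ M * ((t₂ - t₁)
        + (t₂ ^ (2 - α) - t₁ ^ (2 - α)) * Real.Gamma (2 - β)
            / (Real.Gamma (3 - α) * Real.Gamma (α - β + 1))) := by
  have hγ : 0 < α - β := by linarith
  set c := Real.Gamma (2 - β) / (Real.Gamma (3 - α) * Real.Gamma (α - β))
  set I := ∫ s in (0 : ℝ)..1, (1 - s) ^ (α - β - 1) * F s
  set k := c * (t₂ ^ (2 - α) - t₁ ^ (2 - α))
  have hΓ : 0 < Real.Gamma (3 - α) := Gamma_pos_of_pos (by linarith)
  have hk : 0 ≤ k := mul_nonneg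
    (div_nonneg (Gamma_pos_of_pos (by linarith)).le (mul_pos hΓ (Gamma_pos_of_pos hγ)).le)
    (sub_nonneg.2 (rpow_le_rpow h₀ h₁₂ (by linarith)))
  have hI : |I| ≤ M / (α - β) := abs_integral_one_sub_rpow_mul_le hγ hFM
  have hFi : ∀ t ∈ Icc (0 : ℝ) 1, IntervalIntegrable F volume 0 t := fun t ht =>
    (hF.mono (by rw [uIcc_of_le ht.1]; exact Icc_subset_Icc_right ht.2)).intervalIntegrable
  have hdiff : (∫ s in (0 : ℝ)..t₂, F s) - (∫ s in (0 : ℝ)..t₁, F s) = ∫ s in t₁..t₂, F s :=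
    intervalIntegral.integral_interval_sub_left (hFi t₂ ⟨h₀.trans h₁₂, h₂⟩)
      (hFi t₁ ⟨h₀, h₁₂.trans h₂⟩)
  have hinc : |∫ s in t₁..t₂, F s| ≤ M * (t₂ - t₁) :=
    abs_integral_le_of_abs_le h₁₂ fun s hs => hFM s ⟨h₀.trans hs.1.le, hs.2.trans h₂⟩
  calc _ = |(∫ s in t₁..t₂, F s) - k * I| := by
        rw [← hdiff]
        congr 1
        simp only [k, c]
        ring
    _ ≤ |∫ s in t₁..t₂, F s| + k * |I| :=
        (abs_sub _ _).trans_eq (by rw [abs_mul, abs_of_nonneg hk])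
    _ ≤ M * (t₂ - t₁) + k * (M / (α - β)) := by gcongr
    _ = _ := by
        rw [Gamma_add_one hγ.ne']
        simp only [k, c]
        field_simp
end

section
/- Let α = 3/2, β = 1/2, ξ = 1/2 and f(t,u,v) = (sin²t/(11(e^{2t} + 3eᵗ + 1)))·(3 + t + 5u + v). Then there exists exactly one pair (u, v) of continuous functions u, v : [0,1] → ℝ satisfying, for all t ∈ [0,1]: u(t) = ∫₀¹ G(t,s) f(s, u(s), v(s)) ds and v(t) = ∫₀ᵗ f(s, u(s), v(s)) ds − (Γ(2−β) t^{2−α}/(Γ(3−α)Γ(α−β))) ∫₀¹ (1−s)^{α−β−1} f(s, u(s), v(s)) ds. (Equivalently, the example boundary value problem ᶜD^{3/2}u(t) = f(t, u(t), ᶜD^{1/2}u(t)), u(0) = (1/2)u(1), ᶜD^{1/2}u(0) = (1/2)·ᶜD^{1/2}u(1) has a unique solution on [0,1].) -/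
open Real MeasureTheory Set NNReal

/-- The right-hand side of the example boundary value problem. -/
noncomputable def fEx (t u v : ℝ) : ℝ :=
  Real.sin t ^ 2 / (11 * (Real.exp (2 * t) + 3 * Real.exp t + 1)) * (3 + t + 5 * u + v)

/-! ### Auxiliary development -/

noncomputable def Gs (t s : ℝ) : ℝ :=
  (Real.sqrt (t - s) + Real.sqrt (1 - s)) / Real.Gamma (3/2)
    - Real.Gamma (3/2) * (1 + t)

lemma gamma32_pos : 0 < Real.Gamma (3/2) := Real.Gamma_pos_of_pos (by norm_num)

lemma gamma32_eq : Real.Gamma (3/2) = Real.sqrt π / 2 := by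
  have h : (3/2 : ℝ) = 1/2 + 1 := by norm_num
  rw [h, Real.Gamma_add_one (by norm_num), Real.Gamma_one_half_eq]; ring

lemma gamma32_lb : (4/5 : ℝ) ≤ Real.Gamma (3/2) := by
  rw [gamma32_eq]
  have h : (8/5:ℝ) ≤ Real.sqrt π := by
    have : Real.sqrt ((8/5)^2) ≤ Real.sqrt π := Real.sqrt_le_sqrt (by nlinarith [Real.pi_gt_three])
    rwa [Real.sqrt_sq (by norm_num)] at this
  linarith

lemma gamma32_ub : Real.Gamma (3/2) ≤ 1 := by
  rw [gamma32_eq]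
  have h : Real.sqrt π ≤ 2 := by
    have : Real.sqrt π ≤ Real.sqrt (2^2) := Real.sqrt_le_sqrt (by nlinarith [Real.pi_lt_d2])
    rwa [Real.sqrt_sq (by norm_num)] at this
  linarith

lemma G_eq (t s : ℝ) : G (3/2) (1/2) (1/2) t s = Gs t s := by
  have hc := gamma32_pos.ne'
  have h1 : Real.Gamma ((3:ℝ)/2 - 1/2) = 1 := by norm_num [Real.Gamma_one]
  have hrw : ∀ x : ℝ, x ^ ((3:ℝ)/2 - 1) = Real.sqrt x := by
    intro x; rw [show (3:ℝ)/2 - 1 = 1/(2:ℝ) by norm_num, ← Real.sqrt_eq_rpow]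
  have hz : ∀ x : ℝ, x ^ ((3:ℝ)/2 - 1/2 - 1) = 1 := by
    intro x; rw [show (3:ℝ)/2 - 1/2 - 1 = (0:ℝ) by norm_num, Real.rpow_zero]
  have h2 : (2:ℝ) - 1/2 = 3/2 := by norm_num
  unfold G Gs
  rw [h1, h2, hrw, hrw, hz]
  split_ifs with h
  · field_simp; ring
  · have ht : t - s < 0 := by push_neg at h; linarith
    rw [Real.sqrt_eq_zero_of_nonpos ht.le]
    field_simp; ring

abbrev I01 : Set ℝ := Set.Icc (0:ℝ) 1

noncomputable def ext01 (u : C(I01, ℝ)) : ℝ → ℝ :=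
  Set.IccExtend (by norm_num : (0:ℝ) ≤ 1) u

lemma cont_ext01 (u : C(I01,ℝ)) : Continuous (ext01 u) := u.continuous.Icc_extend'

lemma ext01_of_mem (u : C(I01,ℝ)) {s : ℝ} (hs : s ∈ I01) : ext01 u s = u ⟨s, hs⟩ :=
  Set.IccExtend_of_mem _ _ hs

noncomputable def wfun (x : C(I01,ℝ) × C(I01,ℝ)) (s : ℝ) : ℝ :=
  fEx s (ext01 x.1 s) (ext01 x.2 s)

lemma denom_pos (s : ℝ) : 0 < 11 * (Real.exp (2*s) + 3 * Real.exp s + 1) := by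
  positivity

lemma cont_wfun (x : C(I01,ℝ) × C(I01,ℝ)) : Continuous (wfun x) := by
  unfold wfun fEx
  refine Continuous.mul (Continuous.div (by fun_prop) (by fun_prop) fun s => (denom_pos s).ne') ?_
  have h1 := cont_ext01 x.1
  have h2 := cont_ext01 x.2
  fun_prop

lemma coef_bound {s : ℝ} (hs : 0 ≤ s) :
    |Real.sin s ^ 2 / (11 * (Real.exp (2*s) + 3 * Real.exp s + 1))| ≤ 1/55 := by
  have h1 : (1:ℝ) ≤ Real.exp (2*s) := Real.one_le_exp (by linarith)
  have h2 : (1:ℝ) ≤ Real.exp s := Real.one_le_exp hs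
  have hsin : Real.sin s ^ 2 ≤ 1 := by
    have := Real.neg_one_le_sin s; have := Real.sin_le_one s; nlinarith
  rw [abs_div, abs_of_nonneg (by positivity : (0:ℝ) ≤ Real.sin s ^ 2),
    abs_of_pos (denom_pos s), div_le_iff₀ (denom_pos s)]
  nlinarith [sq_nonneg (Real.sin s)]

lemma dist_comp_le (x y : C(I01,ℝ) × C(I01,ℝ)) :
    dist x.1 y.1 ≤ dist x y ∧ dist x.2 y.2 ≤ dist x y := by
  rw [Prod.dist_eq]; exact ⟨le_max_left _ _, le_max_right _ _⟩

lemma dist_wfun (x y : C(I01,ℝ) × C(I01,ℝ)) {s : ℝ} (hs : s ∈ I01) :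
    |wfun x s - wfun y s| ≤ 6/55 * dist x y := by
  obtain ⟨hp1, hp2⟩ := dist_comp_le x y
  have ha : |ext01 x.1 s - ext01 y.1 s| ≤ dist x y := by
    rw [ext01_of_mem _ hs, ext01_of_mem _ hs, ← Real.dist_eq]
    exact (ContinuousMap.dist_apply_le_dist _).trans hp1
  have hb : |ext01 x.2 s - ext01 y.2 s| ≤ dist x y := by
    rw [ext01_of_mem _ hs, ext01_of_mem _ hs, ← Real.dist_eq]
    exact (ContinuousMap.dist_apply_le_dist _).trans hp2
  have hD : (0:ℝ) ≤ dist x y := dist_nonneg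
  have hkey : wfun x s - wfun y s
      = Real.sin s ^ 2 / (11 * (Real.exp (2*s) + 3 * Real.exp s + 1))
        * (5 * (ext01 x.1 s - ext01 y.1 s) + (ext01 x.2 s - ext01 y.2 s)) := by
    unfold wfun fEx; ring
  rw [hkey, abs_mul]
  have h5 : |5 * (ext01 x.1 s - ext01 y.1 s) + (ext01 x.2 s - ext01 y.2 s)|
      ≤ 6 * dist x y := by
    calc |5 * (ext01 x.1 s - ext01 y.1 s) + (ext01 x.2 s - ext01 y.2 s)|
        ≤ |5 * (ext01 x.1 s - ext01 y.1 s)| + |ext01 x.2 s - ext01 y.2 s| := abs_add_le _ _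
      _ = 5 * |ext01 x.1 s - ext01 y.1 s| + |ext01 x.2 s - ext01 y.2 s| := by
          rw [abs_mul]; norm_num
      _ ≤ 5 * dist x y + dist x y := by linarith
      _ = 6 * dist x y := by ring
  calc |Real.sin s ^ 2 / (11 * (Real.exp (2*s) + 3 * Real.exp s + 1))|
        * |5 * (ext01 x.1 s - ext01 y.1 s) + (ext01 x.2 s - ext01 y.2 s)|
      ≤ (1/55) * (6 * dist x y) :=
        mul_le_mul (coef_bound hs.1) h5 (abs_nonneg _) (by norm_num)
    _ = 6/55 * dist x y := by ring

lemma Gs_bound {t s : ℝ} (ht : t ∈ I01) (hs : s ∈ I01) : |Gs t s| ≤ 9/2 := by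
  have h1 : Real.sqrt (t - s) ≤ 1 := by
    have : Real.sqrt (t - s) ≤ Real.sqrt 1 := Real.sqrt_le_sqrt (by
      have := ht.2; have := hs.1; linarith)
    simpa using this
  have h2 : Real.sqrt (1 - s) ≤ 1 := by
    have : Real.sqrt (1 - s) ≤ Real.sqrt 1 := Real.sqrt_le_sqrt (by
      have := hs.1; linarith)
    simpa using this
  have h1' := Real.sqrt_nonneg (t - s)
  have h2' := Real.sqrt_nonneg (1 - s)
  have hfirst : (Real.sqrt (t - s) + Real.sqrt (1 - s)) / Real.Gamma (3/2) ≤ 5/2 := by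
    have : (Real.sqrt (t - s) + Real.sqrt (1 - s)) / Real.Gamma (3/2) ≤ 2 / (4/5) :=
      div_le_div₀ (by norm_num) (by linarith) (by norm_num) gamma32_lb
    linarith
  have hfirst' : 0 ≤ (Real.sqrt (t - s) + Real.sqrt (1 - s)) / Real.Gamma (3/2) := by
    positivity
  have hsec : 0 ≤ Real.Gamma (3/2) * (1 + t) := by
    have := ht.1; nlinarith [gamma32_pos]
  have hsec' : Real.Gamma (3/2) * (1 + t) ≤ 2 := by
    have := ht.2; nlinarith [gamma32_ub, gamma32_pos]
  unfold Gs
  rw [abs_sub_comm, abs_sub_le_iff]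
  constructor <;> linarith

noncomputable def T (x : C(I01,ℝ) × C(I01,ℝ)) : C(I01,ℝ) × C(I01,ℝ) :=
  (⟨fun t => ∫ s in (0:ℝ)..1, Gs (t:ℝ) s * wfun x s, by
     have h : Continuous (Function.uncurry fun r s => Gs r s * wfun x s) := by
       have e : (Function.uncurry fun r s => Gs r s * wfun x s)
           = fun p : ℝ × ℝ => Gs p.1 p.2 * wfun x p.2 := rfl
       rw [e]
       have hw := cont_wfun x
       unfold Gs
       fun_prop
     exact (intervalIntegral.continuous_parametric_intervalIntegral_of_continuous'
       (μ := volume) h 0 1).comp continuous_subtype_val⟩,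
   ⟨fun t => (∫ s in (0:ℝ)..(t:ℝ), wfun x s)
       - Real.sqrt t * ∫ s in (0:ℝ)..1, wfun x s, by
     have h1 : Continuous fun r : ℝ => ∫ s in (0:ℝ)..r, wfun x s :=
       intervalIntegral.continuous_primitive (fun a b => (cont_wfun x).intervalIntegrable a b) 0
     exact ((h1.comp continuous_subtype_val).sub
       ((Real.continuous_sqrt.comp continuous_subtype_val).mul continuous_const))⟩)

lemma cont_Gs_t (t : ℝ) : Continuous fun s => Gs t s := by
  unfold Gs; fun_prop

lemma T_contract : ContractingWith (9/10 : ℝ≥0) T := by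
  have hK : ((9/10 : ℝ≥0) : ℝ) = 9/10 := by norm_num
  constructor
  · rw [← NNReal.coe_lt_coe, hK]; norm_num
  · apply LipschitzWith.of_dist_le_mul
    intro x y
    have hD : (0:ℝ) ≤ dist x y := dist_nonneg
    rw [hK, Prod.dist_eq]
    have hint : ∀ z : C(I01,ℝ) × C(I01,ℝ), ∀ t a b : ℝ,
        IntervalIntegrable (fun s => Gs t s * wfun z s) volume a b := fun z t a b =>
      (((cont_Gs_t t).mul (cont_wfun z)).intervalIntegrable a b)
    have hintw : ∀ z : C(I01,ℝ) × C(I01,ℝ), ∀ a b : ℝ,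
        IntervalIntegrable (fun s => wfun z s) volume a b := fun z a b =>
      ((cont_wfun z).intervalIntegrable a b)
    apply max_le
    · rw [ContinuousMap.dist_le (by positivity)]
      intro t
      show dist (∫ s in (0:ℝ)..1, Gs (t:ℝ) s * wfun x s)
          (∫ s in (0:ℝ)..1, Gs (t:ℝ) s * wfun y s) ≤ 9/10 * dist x y
      rw [Real.dist_eq, ← intervalIntegral.integral_sub (hint x t 0 1) (hint y t 0 1)]
      have hb : ∀ s ∈ Set.uIoc (0:ℝ) 1,
          ‖Gs (t:ℝ) s * wfun x s - Gs (t:ℝ) s * wfun y s‖ ≤ 27/55 * dist x y := by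
        intro s hsm
        rw [Set.uIoc_of_le (by norm_num : (0:ℝ) ≤ 1)] at hsm
        have hs : s ∈ I01 := Set.Ioc_subset_Icc_self hsm
        rw [← mul_sub, Real.norm_eq_abs, abs_mul]
        calc |Gs (t:ℝ) s| * |wfun x s - wfun y s|
            ≤ (9/2) * (6/55 * dist x y) :=
              mul_le_mul (Gs_bound t.2 hs) (dist_wfun x y hs) (abs_nonneg _) (by norm_num)
          _ = 27/55 * dist x y := by ring
      calc ‖∫ s in (0:ℝ)..1, (Gs (t:ℝ) s * wfun x s - Gs (t:ℝ) s * wfun y s)‖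
          ≤ 27/55 * dist x y * |1 - 0| :=
            intervalIntegral.norm_integral_le_of_norm_le_const hb
        _ ≤ 9/10 * dist x y := by rw [show |(1:ℝ) - 0| = 1 by norm_num]; linarith
    · rw [ContinuousMap.dist_le (by positivity)]
      intro t
      have ht0 : (0:ℝ) ≤ (t:ℝ) := t.2.1
      have ht1 : (t:ℝ) ≤ 1 := t.2.2
      show dist ((∫ s in (0:ℝ)..(t:ℝ), wfun x s) - Real.sqrt t * (∫ s in (0:ℝ)..1, wfun x s))
          ((∫ s in (0:ℝ)..(t:ℝ), wfun y s) - Real.sqrt t * (∫ s in (0:ℝ)..1, wfun y s))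
          ≤ 9/10 * dist x y
      rw [Real.dist_eq]
      have hA : |∫ s in (0:ℝ)..(t:ℝ), (wfun x s - wfun y s)| ≤ 6/55 * dist x y := by
        have hb : ∀ s ∈ Set.uIoc (0:ℝ) (t:ℝ),
            ‖wfun x s - wfun y s‖ ≤ 6/55 * dist x y := by
          intro s hsm
          rw [Set.uIoc_of_le ht0] at hsm
          exact dist_wfun x y ⟨hsm.1.le, hsm.2.trans ht1⟩
        calc |∫ s in (0:ℝ)..(t:ℝ), (wfun x s - wfun y s)|
            ≤ 6/55 * dist x y * |(t:ℝ) - 0| :=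
              intervalIntegral.norm_integral_le_of_norm_le_const hb
          _ ≤ 6/55 * dist x y * 1 := by
              apply mul_le_mul_of_nonneg_left _ (by positivity)
              rw [sub_zero, abs_of_nonneg ht0]; exact ht1
          _ = 6/55 * dist x y := by ring
      have hB : |∫ s in (0:ℝ)..1, (wfun x s - wfun y s)| ≤ 6/55 * dist x y := by
        have hb : ∀ s ∈ Set.uIoc (0:ℝ) 1,
            ‖wfun x s - wfun y s‖ ≤ 6/55 * dist x y := by
          intro s hsm
          rw [Set.uIoc_of_le (by norm_num : (0:ℝ) ≤ 1)] at hsm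
          exact dist_wfun x y (Set.Ioc_subset_Icc_self hsm)
        calc |∫ s in (0:ℝ)..1, (wfun x s - wfun y s)|
            ≤ 6/55 * dist x y * |1 - 0| :=
              intervalIntegral.norm_integral_le_of_norm_le_const hb
          _ = 6/55 * dist x y := by rw [show |(1:ℝ) - 0| = 1 by norm_num]; ring
      have hsq : Real.sqrt t ≤ 1 := by
        have : Real.sqrt t ≤ Real.sqrt 1 := Real.sqrt_le_sqrt ht1
        simpa using this
      have hsq' := Real.sqrt_nonneg (t:ℝ)
      have hkey : (∫ s in (0:ℝ)..(t:ℝ), wfun x s) - Real.sqrt t * (∫ s in (0:ℝ)..1, wfun x s)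
          - ((∫ s in (0:ℝ)..(t:ℝ), wfun y s) - Real.sqrt t * (∫ s in (0:ℝ)..1, wfun y s))
          = (∫ s in (0:ℝ)..(t:ℝ), (wfun x s - wfun y s))
            - Real.sqrt t * (∫ s in (0:ℝ)..1, (wfun x s - wfun y s)) := by
        rw [intervalIntegral.integral_sub (hintw x 0 t) (hintw y 0 t),
          intervalIntegral.integral_sub (hintw x 0 1) (hintw y 0 1)]
        ring
      rw [hkey]
      calc |(∫ s in (0:ℝ)..(t:ℝ), (wfun x s - wfun y s))
            - Real.sqrt t * (∫ s in (0:ℝ)..1, (wfun x s - wfun y s))|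
          ≤ |∫ s in (0:ℝ)..(t:ℝ), (wfun x s - wfun y s)|
            + Real.sqrt t * |∫ s in (0:ℝ)..1, (wfun x s - wfun y s)| := by
            refine (abs_sub _ _).trans ?_
            rw [abs_mul, abs_of_nonneg hsq']
        _ ≤ 6/55 * dist x y + 1 * (6/55 * dist x y) := by
            have := mul_le_mul hsq hB (abs_nonneg _) (by norm_num : (0:ℝ) ≤ 1)
            nlinarith [mul_le_mul_of_nonneg_left hB hsq', abs_nonneg (∫ s in (0:ℝ)..1, (wfun x s - wfun y s))]
        _ ≤ 9/10 * dist x y := by linarith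

lemma coef_eq (t : ℝ) :
    Real.Gamma (2 - (1/2:ℝ)) * t ^ (2 - (3/2:ℝ))
      / (Real.Gamma (3 - (3/2:ℝ)) * Real.Gamma ((3/2:ℝ) - 1/2)) = Real.sqrt t := by
  rw [show (2:ℝ) - 1/2 = 3/2 by norm_num, show (3:ℝ) - 3/2 = 3/2 by norm_num,
    show (3/2:ℝ) - 1/2 = 1 by norm_num, show (2:ℝ) - 3/2 = 1/(2:ℝ) by norm_num,
    Real.Gamma_one, ← Real.sqrt_eq_rpow]
  field_simp [gamma32_pos.ne']

lemma pow_zero_eq (s : ℝ) : (1 - s) ^ ((3/2:ℝ) - 1/2 - 1) = 1 := by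
  rw [show (3/2:ℝ) - 1/2 - 1 = (0:ℝ) by norm_num, Real.rpow_zero]

/-- The example BVP `ᶜD^{3/2}u = f(t,u,ᶜD^{1/2}u)`, `u(0) = u(1)/2`,
`ᶜD^{1/2}u(0) = ᶜD^{1/2}u(1)/2` has a unique solution on `[0,1]`. -/
theorem example_unique_solution :
    ∃ u v : ℝ → ℝ,
      (ContinuousOn u (Set.Icc 0 1) ∧ ContinuousOn v (Set.Icc 0 1)
        ∧ (∀ t ∈ Set.Icc (0 : ℝ) 1,
            u t = ∫ s in (0 : ℝ)..1, G (3 / 2) (1 / 2) (1 / 2) t s * fEx s (u s) (v s))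
        ∧ (∀ t ∈ Set.Icc (0 : ℝ) 1,
            v t = (∫ s in (0 : ℝ)..t, fEx s (u s) (v s))
              - (Real.Gamma (2 - (1 / 2 : ℝ)) * t ^ (2 - (3 / 2 : ℝ))
                    / (Real.Gamma (3 - (3 / 2 : ℝ)) * Real.Gamma ((3 / 2 : ℝ) - 1 / 2)))
                  * (∫ s in (0 : ℝ)..1,
                      (1 - s) ^ ((3 / 2 : ℝ) - 1 / 2 - 1) * fEx s (u s) (v s))))
      ∧ ∀ u' v' : ℝ → ℝ,
          (ContinuousOn u' (Set.Icc 0 1) ∧ ContinuousOn v' (Set.Icc 0 1)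
            ∧ (∀ t ∈ Set.Icc (0 : ℝ) 1,
                u' t = ∫ s in (0 : ℝ)..1, G (3 / 2) (1 / 2) (1 / 2) t s * fEx s (u' s) (v' s))
            ∧ (∀ t ∈ Set.Icc (0 : ℝ) 1,
                v' t = (∫ s in (0 : ℝ)..t, fEx s (u' s) (v' s))
                  - (Real.Gamma (2 - (1 / 2 : ℝ)) * t ^ (2 - (3 / 2 : ℝ))
                        / (Real.Gamma (3 - (3 / 2 : ℝ)) * Real.Gamma ((3 / 2 : ℝ) - 1 / 2)))
                      * (∫ s in (0 : ℝ)..1,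
                          (1 - s) ^ ((3 / 2 : ℝ) - 1 / 2 - 1) * fEx s (u' s) (v' s)))) →
          ∀ t ∈ Set.Icc (0 : ℝ) 1, u' t = u t ∧ v' t = v t := by
  obtain ⟨p, hfix, huniq⟩ : ∃ p : C(I01,ℝ) × C(I01,ℝ), T p = p ∧ ∀ q, T q = q → q = p :=
    ⟨ContractingWith.fixedPoint T T_contract, T_contract.fixedPoint_isFixedPt,
     fun q hq => T_contract.fixedPoint_unique hq⟩
  refine ⟨ext01 p.1, ext01 p.2,
    ⟨(cont_ext01 p.1).continuousOn, (cont_ext01 p.2).continuousOn, ?_, ?_⟩, ?_⟩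
  · intro t ht
    have h1 : (T p).1 ⟨t, ht⟩ = p.1 ⟨t, ht⟩ := by rw [hfix]
    have h2 : (T p).1 ⟨t, ht⟩ = ∫ s in (0:ℝ)..1, Gs t s * wfun p s := rfl
    rw [ext01_of_mem p.1 ht, ← h1, h2]
    apply intervalIntegral.integral_congr
    intro s _
    show Gs t s * wfun p s = G (3/2) (1/2) (1/2) t s * fEx s (ext01 p.1 s) (ext01 p.2 s)
    rw [G_eq]; rfl
  · intro t ht
    rw [coef_eq]
    simp only [pow_zero_eq, one_mul]
    have h1 : (T p).2 ⟨t, ht⟩ = p.2 ⟨t, ht⟩ := by rw [hfix]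
    have h2 : (T p).2 ⟨t, ht⟩
        = (∫ s in (0:ℝ)..t, wfun p s) - Real.sqrt t * (∫ s in (0:ℝ)..1, wfun p s) := rfl
    rw [ext01_of_mem p.2 ht, ← h1, h2]
    rfl
  · rintro u' v' ⟨hcu, hcv, he1, he2⟩ t ht
    set q : C(I01,ℝ) × C(I01,ℝ) :=
      (⟨I01.restrict u', hcu.restrict⟩, ⟨I01.restrict v', hcv.restrict⟩) with hqdef
    have hwq : ∀ s, s ∈ I01 → wfun q s = fEx s (u' s) (v' s) := by
      intro s hs
      unfold wfun
      rw [ext01_of_mem _ hs, ext01_of_mem _ hs]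
      rfl
    have hfq : T q = q := by
      apply Prod.ext
      · ext t'
        show (∫ s in (0:ℝ)..1, Gs (t':ℝ) s * wfun q s) = q.1 t'
        have hq1 : q.1 t' = u' t' := rfl
        rw [hq1, he1 t' t'.2]
        apply intervalIntegral.integral_congr
        intro s hs
        rw [Set.uIcc_of_le (by norm_num : (0:ℝ) ≤ 1)] at hs
        show Gs (t':ℝ) s * wfun q s
            = G (3/2) (1/2) (1/2) (t':ℝ) s * fEx s (u' s) (v' s)
        rw [G_eq, hwq s hs]
      · ext t'
        show (∫ s in (0:ℝ)..(t':ℝ), wfun q s)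
            - Real.sqrt t' * (∫ s in (0:ℝ)..1, wfun q s) = q.2 t'
        have hq2 : q.2 t' = v' t' := rfl
        rw [hq2, he2 t' t'.2, coef_eq]
        congr 1
        · apply intervalIntegral.integral_congr
          intro s hs
          rw [Set.uIcc_of_le t'.2.1] at hs
          exact hwq s ⟨hs.1, hs.2.trans t'.2.2⟩
        · congr 1
          apply intervalIntegral.integral_congr
          intro s hs
          rw [Set.uIcc_of_le (by norm_num : (0:ℝ) ≤ 1)] at hs
          show wfun q s = (1 - s) ^ ((3/2:ℝ) - 1/2 - 1) * fEx s (u' s) (v' s)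
          rw [pow_zero_eq, one_mul, hwq s hs]
    have hqp : q = p := huniq q hfq
    constructor
    · have h : u' t = q.1 ⟨t, ht⟩ := rfl
      rw [h, hqp, ← ext01_of_mem p.1 ht]
    · have h : v' t = q.2 ⟨t, ht⟩ := rfl
      rw [h, hqp, ← ext01_of_mem p.2 ht]
end
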